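/- arXiv:1912.00549 — 8 statements merged into one kernel-verified Lean document; each statement's English description precedes it below -/
import Mathlib

section
/- Let α : ℕ → {0,1} be a schedule satisfying SLA (C,T), i.e., for every Q ≥ 0, the sum α(QT) + ... + α(QT + T − 1) ≥ C. If T ≤ T'/2, K = ⌊T'/T⌋, and (K−1)·C ≥ C', then α satisfies SLA (C',T'), i.e., for every Q' ≥ 0, α(Q'T') + ... + α(Q'T' + T' − 1) ≥ C'. -/
/-- α satisfies SLA (C,T): in every aligned interval of length T the allocation is ≥ C. -/
def Sat (C T : ℕ) (α : ℕ → ℕ) : Prop :=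
  ∀ Q : ℕ, C ≤ ∑ i ∈ Finset.range T, α (Q * T + i)

/-
The first multiple of T after a lies at most T past a, so the window [a, a + T') still contains
the K - 1 consecutive aligned blocks of length T that follow it, each carrying at least C.
-/

open Finset

namespace Sat

variable {C T : ℕ} {α : ℕ → ℕ}

theorem le_sum_range_mul (hsat : Sat C T α) (m k : ℕ) :
    k * C ≤ ∑ i ∈ range (k * T), α (m * T + i) := by
  induction k with
  | zero => simp
  | succ k ih =>
    have hblock : C ≤ ∑ i ∈ range T, α (m * T + (k * T + i)) := by
      simpa only [add_mul, add_assoc] using hsat (m + k)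
    rw [add_one_mul, add_one_mul, sum_range_add]
    exact Nat.add_le_add ih hblock

theorem le_sum_window (hsat : Sat C T α) (hT : 0 < T) (a L : ℕ) :
    (L / T - 1) * C ≤ ∑ i ∈ range L, α (a + i) := by
  rcases Nat.eq_zero_or_pos (L / T) with hL | hL
  · simp [hL]
  set k := L / T - 1
  set m := a / T + 1
  have hmT : m * T = a / T * T + T := add_one_mul _ _
  have ha₁ := Nat.div_mul_le_self a T
  have ha₂ := Nat.lt_div_mul_add (a := a) hT
  obtain ⟨r, hr⟩ : ∃ r, m * T = a + r := ⟨m * T - a, by omega⟩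
  have hfit : r + k * T ≤ L := by
    have hk : k + 1 = L / T := Nat.sub_add_cancel hL
    have hkT : k * T + T = L / T * T := by rw [← add_one_mul, hk]
    have := Nat.div_mul_le_self L T
    omega
  calc k * C
      ≤ ∑ i ∈ range (k * T), α (a + (r + i)) := by
        simpa only [hr, add_assoc] using hsat.le_sum_range_mul m k
    _ ≤ ∑ i ∈ range (r + k * T), α (a + i) := by
        rw [sum_range_add]
        exact Nat.le_add_left _ _
    _ ≤ ∑ i ∈ range L, α (a + i) :=
        sum_le_sum_of_subset (range_subset_range.mpr hfit)

end Sat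

theorem stmt_1_general (C T C' T' K : ℕ) (α : ℕ → ℕ)
    (hT : 1 ≤ T)
    (hK : K = T' / T) (hC : C' ≤ (K - 1) * C)
    (hsat : Sat C T α) : Sat C' T' α := fun Q' =>
  hC.trans (hK ▸ hsat.le_sum_window hT (Q' * T') T')

theorem stmt_1 (C T C' T' K : ℕ) (α : ℕ → ℕ) (hbin : ∀ n, α n ≤ 1)
    (hCT : C ≤ T) (hT : 1 ≤ T) (hT' : 1 ≤ T')
    (hhalf : T ≤ T' / 2) (hK : K = T' / T) (hC : C' ≤ (K - 1) * C)
    (hsat : Sat C T α) : Sat C' T' α :=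
  stmt_1_general C T C' T' K α hT hK hC hsat
end

section
/- Let α : ℕ → {0,1} be a schedule satisfying SLA (C,T). If T > T' and C ≥ T − (T' − C')/2 (equivalently 2C + T' − 2T ≥ C'), then α satisfies SLA (C',T'). -/
open Finset

lemma Sat.le_sum_Ico {C T : ℕ} {α : ℕ → ℕ} (hsat : Sat C T α) (b : ℕ) :
    C ≤ ∑ j ∈ Ico (b * T) (b * T + T), α j := by
  rw [sum_Ico_eq_sum_range]
  simpa using hsat b

lemma Sat.mul_le_sum_Ico {C T : ℕ} {α : ℕ → ℕ} (hsat : Sat C T α) (b k : ℕ) :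
    k * C ≤ ∑ j ∈ Ico (b * T) (b * T + k * T), α j := by
  induction k with
  | zero => simp
  | succ k ih =>
    have hnext := hsat.le_sum_Ico (b + k)
    rw [add_mul] at hnext
    rw [add_one_mul, add_one_mul, ← add_assoc,
      ← sum_Ico_consecutive α (Nat.le_add_right _ (k * T)) (Nat.le_add_right _ T)]
    omega

lemma sum_le_sum_subset_add_card_sdiff {s t : Finset ℕ} {α : ℕ → ℕ} (hbin : ∀ n, α n ≤ 1)
    (hst : s ⊆ t) : ∑ j ∈ t, α j ≤ ∑ j ∈ s, α j + #(t \ s) := by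
  rw [← sum_sdiff hst, add_comm]
  gcongr
  simpa using sum_le_card_nsmul (t \ s) α 1 fun j _ ↦ hbin j

lemma Sat.two_mul_add_le_sum_window {C T L : ℕ} {α : ℕ → ℕ} (hbin : ∀ n, α n ≤ 1)
    (hsat : Sat C T α) (hT : 0 < T) (hL : L ≤ T) (a : ℕ) :
    2 * C + L ≤ 2 * T + ∑ i ∈ range L, α (a + i) := by
  set b := a / T
  have hdiv : b * T + a % T = a := by rw [mul_comm]; exact Nat.div_add_mod a T
  have hmod : a % T < T := Nat.mod_lt a hT
  have hsub : Ico a (a + L) ⊆ Ico (b * T) (b * T + 2 * T) := Ico_subset_Ico (by omega) (by omega)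
  have hblocks := hsat.mul_le_sum_Ico b 2
  have hcover := sum_le_sum_subset_add_card_sdiff hbin hsub
  have hwindow : ∑ j ∈ Ico a (a + L), α j = ∑ i ∈ range L, α (a + i) := by
    rw [sum_Ico_eq_sum_range, Nat.add_sub_cancel_left]
  rw [card_sdiff_of_subset hsub, Nat.card_Ico, Nat.card_Ico, hwindow] at hcover
  omega

theorem stmt_2_general (C T C' T' : ℕ) (α : ℕ → ℕ) (hbin : ∀ n, α n ≤ 1)
    (hTT' : T' < T) (hC : 2 * T + C' ≤ 2 * C + T')
    (hsat : Sat C T α) : Sat C' T' α := by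
  intro Q
  have hwindow := hsat.two_mul_add_le_sum_window hbin (by omega) hTT'.le (Q * T')
  omega

/-- if T > T' and 2C + T' − 2T ≥ C', then Sat (C,T) implies Sat (C',T'). -/
theorem stmt_2 (C T C' T' : ℕ) (α : ℕ → ℕ) (hbin : ∀ n, α n ≤ 1)
    (hCT : C ≤ T) (hC'T' : C' ≤ T') (hT : 1 ≤ T) (hT' : 1 ≤ T')
    (hTT' : T' < T) (hC : 2 * T + C' ≤ 2 * C + T')
    (hsat : Sat C T α) : Sat C' T' α :=
  stmt_2_general C T C' T' α hbin hTT' hC hsat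
end

section
/- Let α : ℕ → {0,1} be a schedule satisfying SLA (C,T). If T'/2 < T ≤ T' and C ≥ T − (T' − C')/3 (equivalently 3C + T' − 3T ≥ C'), then α satisfies SLA (C',T'). -/
/-!
A window of length `T'` starting anywhere lies inside three consecutive aligned windows of
length `T` (because `T' < 2T`), which together contain at least `3C` ones. The part of those
`3T` slots outside the window has `3T - T'` slots, each contributing at most one, so the window
contains at least `3C - (3T - T') ≥ C'` ones.
-/

open Finset

lemma sum_Ico_le_of_le_one {α : ℕ → ℕ} (hα : ∀ n, α n ≤ 1) (a b : ℕ) :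
    ∑ x ∈ Ico a b, α x ≤ b - a := by
  simpa using sum_le_card_nsmul (Ico a b) α 1 fun x _ => hα x

namespace Sat

variable {C T : ℕ} {α : ℕ → ℕ}

lemma le_sum_Ico_s3 (h : Sat C T α) (q : ℕ) : C ≤ ∑ x ∈ Ico (q * T) (q * T + T), α x := by
  rw [sum_Ico_eq_sum_range]
  simpa using h q

lemma mul_le_sum_Ico_s3 (h : Sat C T α) (q n : ℕ) :
    n * C ≤ ∑ x ∈ Ico (q * T) (q * T + n * T), α x := by
  induction n with
  | zero => simp
  | succ n ih =>
    have hlast := h.le_sum_Ico_s3 (q + n)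
    rw [add_mul] at hlast
    rw [show q * T + (n + 1) * T = q * T + n * T + T by ring,
      ← sum_Ico_consecutive _ (Nat.le_add_right _ (n * T)) (Nat.le_add_right _ T)]
    linarith

/-- `hL` is what makes the window fit inside the `n` aligned blocks starting at `(a / T) * T`. -/
lemma mul_add_le_sum_range (hα : ∀ n, α n ≤ 1) (h : Sat C T α) (hT : 0 < T) {n L : ℕ}
    (hL : L + T ≤ n * T + 1) (a : ℕ) :
    n * C + L ≤ ∑ i ∈ range L, α (a + i) + n * T := by
  set k := a / T
  have hka : k * T ≤ a := Nat.div_mul_le_self a T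
  have hak : a < k * T + T := Nat.lt_div_mul_add hT
  have hcover := h.mul_le_sum_Ico_s3 k n
  rw [← sum_Ico_consecutive _ (by omega : k * T ≤ a + L) (by omega : a + L ≤ k * T + n * T),
    ← sum_Ico_consecutive _ hka (Nat.le_add_right a L)] at hcover
  have hleft := sum_Ico_le_of_le_one hα (k * T) a
  have hright := sum_Ico_le_of_le_one hα (a + L) (k * T + n * T)
  have hwindow : ∑ i ∈ range L, α (a + i) = ∑ x ∈ Ico a (a + L), α x := by
    rw [sum_Ico_eq_sum_range, Nat.add_sub_cancel_left]
  omega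

end Sat

theorem stmt_3_general (C T C' T' : ℕ) (α : ℕ → ℕ) (hbin : ∀ n, α n ≤ 1)
    (hlow : T' < 2 * T) (hC : 3 * T + C' ≤ 3 * C + T')
    (hsat : Sat C T α) : Sat C' T' α := by
  intro Q
  have hwindow := hsat.mul_add_le_sum_range (n := 3) (L := T') hbin (by omega) (by omega) (Q * T')
  omega

/-- if T'/2 < T ≤ T' and 3C + T' − 3T ≥ C', then Sat (C,T) implies Sat (C',T'). -/
theorem stmt_3 (C T C' T' : ℕ) (α : ℕ → ℕ) (hbin : ∀ n, α n ≤ 1)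
    (hCT : C ≤ T) (hC'T' : C' ≤ T') (hT : 1 ≤ T) (hT' : 1 ≤ T')
    (hlow : T' < 2 * T) (hhigh : T ≤ T') (hC : 3 * T + C' ≤ 3 * C + T')
    (hsat : Sat C T α) : Sat C' T' α :=
  stmt_3_general C T C' T' α hbin hlow hC hsat
end

section
/- For any K ≥ 1, every schedule satisfying SLA (C,T) also satisfies SLA (K·C, K·T); that is, (C,T) is a subtype of (KC, KT). -/
open Finset

theorem Finset.sum_range_mul_eq_sum_sum {M : Type*} [AddCommMonoid M] (f : ℕ → M) (k T : ℕ) :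
    ∑ i ∈ range (k * T), f i = ∑ j ∈ range k, ∑ i ∈ range T, f (j * T + i) := by
  induction k with
  | zero => simp
  | succ k ih => rw [Nat.succ_mul, sum_range_add, ih, sum_range_succ]

/-- A window of length `K * T` aligned to a multiple of `K * T` is the union of `K` windows of
length `T` aligned to multiples of `T`. -/
theorem Sat.mul {C T : ℕ} {α : ℕ → ℕ} (h : Sat C T α) (K : ℕ) : Sat (K * C) (K * T) α := by
  intro Q
  calc K * C = ∑ _j ∈ range K, C := by simp
    _ ≤ ∑ j ∈ range K, ∑ i ∈ range T, α ((Q * K + j) * T + i) := sum_le_sum fun j _ => h _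
    _ = ∑ i ∈ range (K * T), α (Q * (K * T) + i) := by
      rw [sum_range_mul_eq_sum_sum]
      refine sum_congr rfl fun j _ => sum_congr rfl fun i _ => ?_
      congr 1
      ring

theorem stmt_4_general (C T K : ℕ) :
    ∀ α : ℕ → ℕ, (∀ n, α n ≤ 1) → Sat C T α → Sat (K * C) (K * T) α :=
  fun _ _ h => h.mul K

/-- (C,T) is a subtype of (K·C, K·T) for any K ≥ 1. -/
theorem stmt_4 (C T K : ℕ) (hCT : C ≤ T) (hT : 1 ≤ T) (hK : 1 ≤ K) :
    ∀ α : ℕ → ℕ, (∀ n, α n ≤ 1) → Sat C T α → Sat (K * C) (K * T) α :=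
  stmt_4_general C T K
end

section
/- Let T' = K·T with K > 1. If C' ≥ K·(C−1) + (K−1)·(T − (C−1)) + 1 (equivalently C' ≥ C + (K−1)·T), then every schedule satisfying SLA (C',T') satisfies SLA (C,T) restricted to windows aligned with T': for every multiple m of T' and every j ∈ {0,...,K−1}, the sum of α over [m+jT, m+(j+1)T−1] is at least C. -/
open Finset

theorem Finset.sum_range_mul_eq_sum_sum_range {M : Type*} [AddCommMonoid M] (f : ℕ → M)
    (K T : ℕ) :
    ∑ i ∈ range (K * T), f i = ∑ j ∈ range K, ∑ i ∈ range T, f (j * T + i) := by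
  induction K with
  | zero => simp
  | succ k ih => rw [Nat.succ_mul, sum_range_add, ih, sum_range_succ]

theorem Finset.sum_le_add_card_sub_one_mul {ι : Type*} [DecidableEq ι] {s : Finset ι}
    {f : ι → ℕ} {b : ℕ} (hf : ∀ i ∈ s, f i ≤ b) {j : ι} (hj : j ∈ s) :
    ∑ i ∈ s, f i ≤ f j + (#s - 1) * b := by
  rw [← add_sum_erase s f hj, ← card_erase_of_mem hj]
  gcongr
  exact sum_le_card_nsmul _ f b fun i hi => hf i (mem_of_mem_erase hi)

theorem sum_range_le_of_le_one {α : ℕ → ℕ} (hbin : ∀ n, α n ≤ 1) (a T : ℕ) :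
    ∑ i ∈ range T, α (a + i) ≤ T := by
  simpa using sum_le_card_nsmul (range T) (fun i => α (a + i)) 1 fun i _ => hbin (a + i)

theorem add_sub_one_mul_le {C T K : ℕ} (hK : 1 ≤ K) (hCT : C ≤ T + 1) :
    C + (K - 1) * T ≤ K * (C - 1) + (K - 1) * (T - (C - 1)) + 1 := by
  rcases C with _ | c
  · simp
  obtain ⟨k, rfl⟩ : ∃ k, K = k + 1 := ⟨K - 1, by omega⟩
  obtain ⟨d, rfl⟩ : ∃ d, T = c + d := ⟨T - c, by omega⟩
  simp only [Nat.add_sub_cancel, Nat.add_sub_cancel_left]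
  linarith

theorem stmt_7_general (C T C' K : ℕ) (α : ℕ → ℕ) (hbin : ∀ n, α n ≤ 1)
    (hCT : C ≤ T)
    (hC' : K * (C - 1) + (K - 1) * (T - (C - 1)) + 1 ≤ C')
    (hsat : Sat C' (K * T) α) :
    ∀ Q : ℕ, ∀ j < K, C ≤ ∑ i ∈ Finset.range T, α (Q * (K * T) + j * T + i) := by
  intro Q j hj
  have hwindow : C' ≤ ∑ j ∈ range K, ∑ i ∈ range T, α (Q * (K * T) + j * T + i) := by
    simpa only [sum_range_mul_eq_sum_sum_range (fun i => α (Q * (K * T) + i)), ← add_assoc]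
      using hsat Q
  have hblocks := sum_le_add_card_sub_one_mul
    (fun j _ => sum_range_le_of_le_one hbin (Q * (K * T) + j * T) T) (mem_range.mpr hj)
  have harith := add_sub_one_mul_le (K := K) (by omega) (by omega : C ≤ T + 1)
  rw [card_range] at hblocks
  omega

/-- with T' = K·T and C' ≥ C + (K−1)·T, every schedule satisfying
(C',T') satisfies (C,T) on all T-subintervals of windows aligned with T'. -/
theorem stmt_7 (C T C' K : ℕ) (α : ℕ → ℕ) (hbin : ∀ n, α n ≤ 1)
    (hC1 : 1 ≤ C) (hCT : C ≤ T) (hK : 1 < K) (hC'T' : C' ≤ K * T)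
    (hC' : K * (C - 1) + (K - 1) * (T - (C - 1)) + 1 ≤ C')
    (hsat : Sat C' (K * T) α) :
    ∀ Q : ℕ, ∀ j < K, C ≤ ∑ i ∈ Finset.range T, α (Q * (K * T) + j * T + i) :=
  stmt_7_general C T C' K α hbin hCT hC' hsat
end

section
/- Let T and T' be positive naturals with gcd(T,T') = g, and suppose T/g and T'/g are coprime with T' < T. Then the number of intervals [q·T', (q+1)·T') with 0 ≤ q < lcm(T,T')/T' that are completely contained in some interval [p·T, (p+1)·T) with 0 ≤ p < lcm(T,T')/T equals n − m + 1, where n = lcm(T,T')/T' and m = lcm(T,T')/T. -/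
/-- with 0 < T' < T, L = lcm(T,T'), m = L/T, n = L/T', the number of
indices q ∈ {0,…,n−1} such that [q·T', (q+1)·T') is completely contained in some
[p·T, (p+1)·T) with p < m equals n − m + 1. -/
theorem stmt_8 (T T' m n : ℕ) (hT' : 0 < T') (hTT' : T' < T)
    (hm : m = Nat.lcm T T' / T) (hn : n = Nat.lcm T T' / T') :
    ((Finset.range n).filter
      (fun q => ∃ p < m, p * T ≤ q * T' ∧ (q + 1) * T' ≤ (p + 1) * T)).card
      = n - m + 1 := by
  have hT : 0 < T := hT'.trans hTT'
  obtain ⟨t, ht⟩ := Nat.gcd_dvd_left T T'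
  obtain ⟨t', ht'⟩ := Nat.gcd_dvd_right T T'
  set g := Nat.gcd T T' with hg
  have hg0 : 0 < g := Nat.gcd_pos_of_pos_left _ hT
  have ht0 : 0 < t := by
    rcases Nat.eq_zero_or_pos t with h | h
    · rw [h, Nat.mul_zero] at ht; omega
    · exact h
  have ht'0 : 0 < t' := by
    rcases Nat.eq_zero_or_pos t' with h | h
    · rw [h, Nat.mul_zero] at ht'; omega
    · exact h
  have htt' : t' < t := by
    by_contra h
    push_neg at h
    have : T ≤ T' := by rw [ht, ht']; exact Nat.mul_le_mul_left g h
    omega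
  have hco : Nat.Coprime t t' := by
    have h := Nat.coprime_div_gcd_div_gcd (m := T) (n := T') hg0
    rwa [← hg, ht, ht', Nat.mul_div_cancel_left _ hg0, Nat.mul_div_cancel_left _ hg0] at h
  have hlcm : Nat.lcm T T' = g * t * t' := by
    have h := Nat.gcd_mul_lcm T T'
    rw [← hg] at h
    have h2 : g * Nat.lcm T T' = g * (g * t * t') := by
      rw [h, ht, ht']; ring
    exact Nat.eq_of_mul_eq_mul_left hg0 h2
  have hm' : m = t' := by
    rw [hm, hlcm, ht, show g * t * t' = (g * t) * t' by ring,
      Nat.mul_div_cancel_left _ (by positivity)]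
  have hn' : n = t := by
    rw [hn, hlcm, ht', show g * t * t' = (g * t') * t by ring,
      Nat.mul_div_cancel_left _ (by positivity)]
  -- the predicate is equivalent to q * T' % T + T' ≤ T
  have key : ∀ q ∈ Finset.range n,
      ((∃ p < m, p * T ≤ q * T' ∧ (q + 1) * T' ≤ (p + 1) * T) ↔ q * T' % T + T' ≤ T) := by
    intro q hq
    rw [Finset.mem_range] at hq
    constructor
    · rintro ⟨p, hpm, h1, h2⟩
      have hlt : q * T' < (p + 1) * T := by
        calc q * T' < (q + 1) * T' := by nlinarith
          _ ≤ (p + 1) * T := h2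
      have hp : q * T' / T = p := Nat.div_eq_of_lt_le h1 hlt
      have hdm := Nat.div_add_mod (q * T') T
      rw [hp] at hdm
      have h2' : q * T' + T' ≤ T * p + T := by nlinarith [h2]
      omega
    · intro hle
      refine ⟨q * T' / T, ?_, Nat.div_mul_le_self _ _, ?_⟩
      · rw [hm']
        apply Nat.div_lt_of_lt_mul
        have hqt : q < t := hn' ▸ hq
        calc q * T' < t * T' := (Nat.mul_lt_mul_right hT').mpr hqt
          _ = T * t' := by rw [ht, ht']; ring
      · have hdm := Nat.div_add_mod (q * T') T
        have h2 : (q + 1) * T' = q * T' / T * T + (q * T' % T + T') := by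
          rw [Nat.add_mul, Nat.one_mul, Nat.mul_comm (q * T' / T) T]; omega
        calc (q + 1) * T' = q * T' / T * T + (q * T' % T + T') := h2
          _ ≤ q * T' / T * T + T := by omega
          _ = (q * T' / T + 1) * T := by ring
  rw [Finset.filter_congr key]
  -- reduce to t, t'
  have hpred : ∀ q, (q * T' % T + T' ≤ T) ↔ (q * t' % t + t' ≤ t) := by
    intro q
    rw [ht, ht', show q * (g * t') = g * (q * t') by ring, Nat.mul_mod_mul_left]
    constructor
    · intro h
      have : g * (q * t' % t + t') ≤ g * t := by
        calc g * (q * t' % t + t') = g * (q * t' % t) + g * t' := by ring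
          _ ≤ g * t := h
      exact Nat.le_of_mul_le_mul_left this hg0
    · intro h
      calc g * (q * t' % t) + g * t' = g * (q * t' % t + t') := by ring
        _ ≤ g * t := Nat.mul_le_mul_left g h
  simp only [hpred, hn', hm']
  -- now count: card of q < t with q*t' % t + t' ≤ t equals t - t' + 1
  have hinj : Set.InjOn (fun q => q * t' % t) (Finset.range t) := by
    intro a ha b hb hab
    simp only [Finset.coe_range, Set.mem_Iio] at ha hb
    simp only at hab
    have hmodeq : a * t' ≡ b * t' [MOD t] := hab
    have : a ≡ b [MOD t] := hmodeq.cancel_right_of_coprime hco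
    have := this.eq_of_lt_of_lt ha hb
    exact this
  have himg : (Finset.range t).image (fun q => q * t' % t) = Finset.range t := by
    apply Finset.eq_of_subset_of_card_le
    · intro r hr
      simp only [Finset.mem_image, Finset.mem_range] at hr ⊢
      obtain ⟨q, _, rfl⟩ := hr
      exact Nat.mod_lt _ ht0
    · rw [Finset.card_image_of_injOn hinj]
  have hcomm : ((Finset.range t).filter (fun q => q * t' % t + t' ≤ t)).image
      (fun q => q * t' % t) = (Finset.range t).filter (fun r => r + t' ≤ t) := by
    conv_rhs => rw [← himg]
    rw [Finset.filter_image]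
  have hcard : ((Finset.range t).filter (fun q => q * t' % t + t' ≤ t)).card
      = ((Finset.range t).filter (fun r => r + t' ≤ t)).card := by
    rw [← hcomm, Finset.card_image_of_injOn (hinj.mono (by
      intro x hx; simp only [Finset.coe_filter, Set.mem_setOf_eq] at hx
      simp only [Finset.coe_range, Set.mem_Iio]
      exact Finset.mem_range.mp hx.1))]
  rw [hcard]
  have : (Finset.range t).filter (fun r => r + t' ≤ t) = Finset.range (t - t' + 1) := by
    ext r
    simp only [Finset.mem_filter, Finset.mem_range]
    omega
  rw [this, Finset.card_range]
end

section
/- Let α be a schedule satisfying SLA (C,T') with (T+C)/2 < T' < T and C ≤ T'. Then among any C+1 consecutive intervals of length T (aligned to multiples of T), at least one interval receives at least C allocation units; equivalently, α cannot have C+1 consecutive unsatisfied T-intervals. -/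
open Finset

section Carry

variable {α : ℕ → ℕ} {C T T' : ℕ}

theorem carry_step {a q k : ℕ} (hT'T : T' < T) (haq : a ≤ q) (hqa : q < a + T')
    (hk : k ≤ ∑ i ∈ Ico a q, α i) (hunsat : ∑ i ∈ Ico a (a + T), α i < C)
    (hwindow : C ≤ ∑ i ∈ Ico q (q + T'), α i) :
    a + T ≤ q + T' ∧ q + T' < a + T + T' ∧ k + 1 ≤ ∑ i ∈ Ico (a + T) (q + T'), α i := by
  have hqT : q ≤ a + T := by omega
  have hsplit := sum_Ico_consecutive α haq hqT
  have hspill : a + T ≤ q + T' := by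
    by_contra! h
    have := sum_le_sum_of_subset (f := α) (Ico_subset_Ico haq h.le)
    omega
  have hsplit' := sum_Ico_consecutive α hqT hspill
  exact ⟨hspill, by omega, by omega⟩

theorem carry_of_unsat {a b n : ℕ} (hT'T : T' < T) (hab : a ≤ b) (hba : b < a + T')
    (hwindow : ∀ j, C ≤ ∑ i ∈ Ico (b + j * T') (b + j * T' + T'), α i)
    (hunsat : ∀ j < n, ∑ i ∈ Ico (a + j * T) (a + j * T + T), α i < C) :
    a + n * T ≤ b + n * T' ∧ b + n * T' < a + n * T + T' ∧
      n ≤ ∑ i ∈ Ico (a + n * T) (b + n * T'), α i := by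
  induction n with
  | zero => simpa using ⟨hab, hba⟩
  | succ n ih =>
    obtain ⟨h₁, h₂, h₃⟩ := ih fun j hj => hunsat j (by omega)
    have := carry_step hT'T h₁ h₂ h₃ (hunsat n (by omega)) (hwindow n)
    simpa only [add_mul, one_mul, add_assoc] using this

theorem exists_le_sum_Ico_of_windows {a b : ℕ} (hT'T : T' < T) (hab : a ≤ b) (hba : b < a + T')
    (hwindow : ∀ j, C ≤ ∑ i ∈ Ico (b + j * T') (b + j * T' + T'), α i) :
    ∃ j < C + 1, C ≤ ∑ i ∈ Ico (a + j * T) (a + j * T + T), α i := by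
  by_contra! hunsat
  obtain ⟨-, h₂, h₃⟩ :=
    carry_of_unsat (n := C) hT'T hab hba hwindow fun j hj => hunsat j (by omega)
  have hsub := sum_le_sum_of_subset (f := α)
    (Ico_subset_Ico_right (a := a + C * T) (show b + C * T' ≤ a + C * T + T by omega))
  have hlast := hunsat C (by omega)
  omega

end Carry

theorem exists_mul_mem_Ico {T' : ℕ} (hT' : 0 < T') (a : ℕ) : ∃ q, a ≤ q * T' ∧ q * T' < a + T' :=
  ⟨(a + T' - 1) / T', by
    have := Nat.div_add_mod' (a + T' - 1) T'
    have := Nat.mod_lt (a + T' - 1) hT'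
    omega⟩

theorem stmt_9_general (C T T' : ℕ) (α : ℕ → ℕ) (hT'T : T' < T)
    (hsat : Sat C T' α) :
    ∀ s : ℕ, ∃ j < C + 1, C ≤ ∑ i ∈ Finset.range T, α ((s + j) * T + i) := by
  intro s
  rcases Nat.eq_zero_or_pos T' with rfl | hT'
  · have hC : C = 0 := by simpa using hsat 0
    exact ⟨0, by omega, by simp [hC]⟩
  obtain ⟨q, hq₁, hq₂⟩ := exists_mul_mem_Ico hT' (s * T)
  have hwindow (j : ℕ) : C ≤ ∑ i ∈ Ico (q * T' + j * T') (q * T' + j * T' + T'), α i := by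
    simpa [sum_Ico_eq_sum_range, add_mul] using hsat (q + j)
  obtain ⟨j, hj, hsum⟩ := exists_le_sum_Ico_of_windows hT'T hq₁ hq₂ hwindow
  refine ⟨j, hj, ?_⟩
  simpa [sum_Ico_eq_sum_range, add_mul] using hsum

/-- with (T+C)/2 < T' < T and C ≤ T', among any C+1 consecutive
aligned T-intervals at least one receives at least C allocation units. -/
theorem stmt_9 (C T T' : ℕ) (α : ℕ → ℕ) (hbin : ∀ n, α n ≤ 1)
    (hC1 : 1 ≤ C) (hCT' : C ≤ T') (hT'T : T' < T) (hfluid : T + C < 2 * T')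
    (hsat : Sat C T' α) :
    ∀ s : ℕ, ∃ j < C + 1, C ≤ ∑ i ∈ Finset.range T, α ((s + j) * T + i) :=
  stmt_9_general C T T' α hT'T hsat
end

section
/- There exists a schedule α : ℕ → {0,1} that satisfies SLA (1,4) (one unit allocated in every aligned interval of length 4) but does not satisfy SLA (1,5); hence (1,4) is not a subtype of (1,5) despite having a higher utilization (1/4 > 1/5). -/
def pairedSchedule (T n : ℕ) : ℕ :=
  if n % (2 * T) = T - 1 ∨ n % (2 * T) = T then 1 else 0

theorem pairedSchedule_le_one (T n : ℕ) : pairedSchedule T n ≤ 1 := by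
  unfold pairedSchedule
  split <;> omega

theorem sat_one_pairedSchedule {T : ℕ} (hT : 0 < T) : Sat 1 T (pairedSchedule T) := by
  intro Q
  obtain ⟨i, hi, hunit⟩ : ∃ i < T, (Q * T + i) % (2 * T) = T - 1 ∨ (Q * T + i) % (2 * T) = T := by
    rcases Nat.even_or_odd' Q with ⟨k, rfl | rfl⟩
    · refine ⟨T - 1, by omega, Or.inl ?_⟩
      rw [show 2 * k * T + (T - 1) = T - 1 + 2 * T * k by ring, Nat.add_mul_mod_self_left,
        Nat.mod_eq_of_lt (by omega)]
    · refine ⟨0, hT, Or.inr ?_⟩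
      rw [show (2 * k + 1) * T + 0 = T + 2 * T * k by ring, Nat.add_mul_mod_self_left,
        Nat.mod_eq_of_lt (by omega)]
  calc 1 = pairedSchedule T (Q * T + i) := by simp [pairedSchedule, hunit]
    _ ≤ ∑ j ∈ Finset.range T, pairedSchedule T (Q * T + j) :=
      Finset.single_le_sum (f := fun j => pairedSchedule T (Q * T + j))
        (fun _ _ => Nat.zero_le _) (Finset.mem_range.mpr hi)

theorem not_sat_one_succ_pairedSchedule {T : ℕ} (hT : 3 ≤ T) :
    ¬ Sat 1 (T + 1) (pairedSchedule T) := by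
  intro hsat
  suffices ∑ i ∈ Finset.range (T + 1), pairedSchedule T (1 * (T + 1) + i) = 0 by
    have := hsat 1
    omega
  refine Finset.sum_eq_zero fun i hi => ?_
  have hi : i < T + 1 := Finset.mem_range.mp hi
  have hres : (1 * (T + 1) + i) % (2 * T) = T + 1 + i ∨
      (1 * (T + 1) + i) % (2 * T) = T + 1 + i - 2 * T := by
    by_cases hlt : T + 1 + i < 2 * T
    · left
      rw [one_mul, Nat.mod_eq_of_lt hlt]
    · right
      rw [one_mul, Nat.mod_eq_sub_mod (by omega), Nat.mod_eq_of_lt (by omega)]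
  unfold pairedSchedule
  split <;> omega

/-- some schedule satisfies (1,4) but not (1,5): ¬((1,4) ⊲ (1,5)). -/
theorem stmt_17 : ∃ α : ℕ → ℕ, (∀ n, α n ≤ 1) ∧ Sat 1 4 α ∧ ¬ Sat 1 5 α :=
  ⟨pairedSchedule 4, pairedSchedule_le_one 4, sat_one_pairedSchedule (by norm_num),
    not_sat_one_succ_pairedSchedule (by norm_num)⟩
end
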